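/- arXiv:2411.18946 — 7 statements merged into one kernel-verified Lean document; each statement's English description precedes it below -/
import Mathlib

section
/- The group of units of the monoid of n×n column-stochastic matrices (under matrix multiplication) consists exactly of the n×n permutation matrices. That is, A ∈ s(n) has an inverse that is also in s(n) if and only if A is a permutation matrix. -/
open Matrix

def IsStochastic {n : ℕ} (A : Matrix (Fin n) (Fin n) ℝ) : Prop :=
  (∀ i j, 0 ≤ A i j) ∧ ∀ j, ∑ i, A i j = 1

def IsPermMatrix {n : ℕ} (A : Matrix (Fin n) (Fin n) ℝ) : Prop :=
  ∃ σ : Equiv.Perm (Fin n), ∀ i j, A i j = if σ j = i then 1 else 0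

/-!
If `A` and `B` are nonnegative with `A * B = 1`, then whenever `B m j > 0` the term
`A k m * B m j` of the vanishing off-diagonal entry `(A * B) k j` forces `A k m = 0` for `k ≠ j`;
column stochasticity of `A` then makes column `m` the unit vector `e_j`. Every column `j` of
the stochastic matrix `B` has a positive entry `B (g j) j`, so column `g j` of `A` is `e_j`;
hence `g` is injective, thus a permutation, and `A` is its permutation matrix.
-/

namespace Matrix

open Equiv

variable {n R : Type*} [Fintype n] [DecidableEq n]

lemma exists_eq_permMatrix_of_transpose_eq_single [Zero R] [One R] [NeZero (1 : R)]
    {A : Matrix n n R} (g : n → n) (hg : ∀ j, Aᵀ (g j) = Pi.single j 1) :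
    ∃ σ : Perm n, A = σ.permMatrix R := by
  have hinj : Function.Injective g := fun j j' h => by
    have hcol : (Pi.single j 1 : n → R) = Pi.single j' 1 := by rw [← hg, ← hg, h]
    by_contra hne
    simpa [Pi.single_eq_of_ne hne] using congrFun hcol j
  let σ := Equiv.ofBijective g (Finite.injective_iff_bijective.mp hinj)
  refine ⟨σ, ext fun k m => ?_⟩
  obtain ⟨j, rfl⟩ := σ.surjective m
  have hentry := congrFun (hg j) k
  simp_all [PEquiv.toMatrix_apply, Pi.single_apply, σ, hinj.eq_iff]

variable [Semiring R] [PartialOrder R] [IsStrictOrderedRing R] {A B : Matrix n n R}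

lemma exists_pos_of_mem_colStochastic (hB : B ∈ colStochastic R n) (j : n) :
    ∃ i, 0 < B i j := by
  obtain ⟨i, -, hi⟩ := Finset.exists_ne_zero_of_sum_ne_zero
    ((sum_col_of_mem_colStochastic hB j).symm ▸ one_ne_zero)
  exact ⟨i, (nonneg_of_mem_colStochastic hB).lt_of_ne' hi⟩

lemma eq_zero_of_mul_eq_one_of_pos (hA : ∀ i j, 0 ≤ A i j) (hB : ∀ i j, 0 ≤ B i j)
    (hAB : A * B = 1) {j m k : n} (hBmj : 0 < B m j) (hkj : k ≠ j) : A k m = 0 := by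
  have hsum : ∑ l, A k l * B l j = 0 := by
    simpa [mul_apply, one_apply, hkj] using congrFun (congrFun hAB k) j
  have hterm := (Finset.sum_eq_zero_iff_of_nonneg fun l _ => mul_nonneg (hA k l) (hB l j)).mp
    hsum m (Finset.mem_univ m)
  by_contra hAkm
  exact (mul_pos ((hA k m).lt_of_ne' hAkm) hBmj).ne' hterm

lemma transpose_eq_single_of_mul_eq_one_of_pos (hA : A ∈ colStochastic R n)
    (hB : ∀ i j, 0 ≤ B i j) (hAB : A * B = 1) {j m : n} (hBmj : 0 < B m j) :
    Aᵀ m = Pi.single j 1 := by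
  have hoff : ∀ k, k ≠ j → A k m = 0 := fun k =>
    eq_zero_of_mul_eq_one_of_pos (fun _ _ => nonneg_of_mem_colStochastic hA) hB hAB hBmj
  have hdiag : A j m = 1 := by
    rw [← sum_col_of_mem_colStochastic hA m,
      Finset.sum_eq_single j (fun k _ => hoff k) (absurd (Finset.mem_univ j))]
  ext k
  by_cases hkj : k = j
  · subst hkj; simpa using hdiag
  · simpa [hkj] using hoff k hkj

theorem exists_eq_permMatrix_of_mul_eq_one (hA : A ∈ colStochastic R n)
    (hB : B ∈ colStochastic R n) (hAB : A * B = 1) : ∃ σ : Perm n, A = σ.permMatrix R := by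
  choose g hg using exists_pos_of_mem_colStochastic hB
  exact exists_eq_permMatrix_of_transpose_eq_single g fun j =>
    transpose_eq_single_of_mul_eq_one_of_pos hA (fun _ _ => nonneg_of_mem_colStochastic hB)
      hAB (hg j)

end Matrix

lemma isStochastic_iff_mem_colStochastic {n : ℕ} {A : Matrix (Fin n) (Fin n) ℝ} :
    IsStochastic A ↔ A ∈ colStochastic ℝ (Fin n) :=
  mem_colStochastic_iff_sum.symm

lemma isPermMatrix_iff_exists_eq_permMatrix {n : ℕ} {A : Matrix (Fin n) (Fin n) ℝ} :
    IsPermMatrix A ↔ ∃ σ : Equiv.Perm (Fin n), A = σ.permMatrix ℝ := by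
  constructor
  · rintro ⟨σ, hσ⟩
    refine ⟨σ⁻¹, ext fun i j => ?_⟩
    simp [hσ, PEquiv.toMatrix_apply, Equiv.symm_apply_eq, @eq_comm _ i]
  · rintro ⟨σ, rfl⟩
    refine ⟨σ⁻¹, fun i j => ?_⟩
    simp [PEquiv.toMatrix_apply, Equiv.symm_apply_eq, @eq_comm _ j]

theorem units_of_stochastic_are_permutations {n : ℕ} (A : Matrix (Fin n) (Fin n) ℝ)
    (hA : IsStochastic A) :
    (∃ B : Matrix (Fin n) (Fin n) ℝ, IsStochastic B ∧ A * B = 1 ∧ B * A = 1) ↔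
      IsPermMatrix A := by
  simp only [isStochastic_iff_mem_colStochastic, isPermMatrix_iff_exists_eq_permMatrix] at hA ⊢
  constructor
  · rintro ⟨B, hB, hAB, -⟩
    exact exists_eq_permMatrix_of_mul_eq_one hA hB hAB
  · rintro ⟨σ, rfl⟩
    refine ⟨σ⁻¹.permMatrix ℝ, permMatrix_mem_colStochastic, ?_, ?_⟩ <;>
      simp [← permMatrix_mul]
end

section
/- If G is a generating set of the monoid S, then for every building block x of S, the set S⁻¹·x·S⁻¹ has nonempty intersection with G. -/
def IsBuildingBlock {M : Type*} [Monoid M] (x : M) : Prop :=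
  ∀ y z : M, x = y * z → (∃ u : Mˣ, y = x * (u : M)) ∨ (∃ u : Mˣ, z = (u : M) * x)

/-- Peel factors off the left: each step either exhibits the first factor as `u * x * v`,
or transfers the equation `prod = unit * x` to the remaining factors. -/
theorem IsBuildingBlock.exists_mem_eq_unit_mul_mul_unit {M : Type*} [Monoid M] {x : M}
    (hx : IsBuildingBlock x) (a : M) (t : List M) (u : Mˣ) (h : (a :: t).prod = u * x) :
    ∃ g ∈ a :: t, ∃ v w : Mˣ, g = (v : M) * x * (w : M) := by
  induction t generalizing a u with
  | nil => exact ⟨a, List.mem_cons_self, u, 1, by simpa using h⟩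
  | cons b t ih =>
    have hsplit : x = ((u⁻¹ : Mˣ) : M) * a * (b :: t).prod := by
      rw [mul_assoc, Units.eq_inv_mul_iff_mul_eq, ← List.prod_cons, h]
    rcases hx _ _ hsplit with ⟨v, hv⟩ | ⟨v, hv⟩
    · exact ⟨a, List.mem_cons_self, u, v, by rwa [mul_assoc, ← Units.inv_mul_eq_iff_eq_mul]⟩
    · obtain ⟨g, hg, hgx⟩ := ih b v hv
      exact ⟨g, List.mem_cons_of_mem a hg, hgx⟩

theorem generating_set_meets_building_blocks {M : Type*} [Monoid M] (G : Set M)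
    (hG : ∀ s : M, ∃ l : List M, l ≠ [] ∧ (∀ g ∈ l, g ∈ G) ∧ l.prod = s)
    (x : M)
    (hx : ∀ y z : M, x = y * z →
      (∃ u : Mˣ, y = x * (u : M)) ∨ (∃ u : Mˣ, z = (u : M) * x)) :
    ∃ g ∈ G, ∃ u v : Mˣ, g = (u : M) * x * (v : M) := by
  obtain ⟨l, hne, hlG, hprod⟩ := hG x
  obtain ⟨a, t, rfl⟩ := List.exists_cons_of_ne_nil hne
  obtain ⟨g, hg, hgx⟩ :=
    IsBuildingBlock.exists_mem_eq_unit_mul_mul_unit hx a t 1 (by rw [hprod, Units.val_one, one_mul])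
  exact ⟨g, hlG g hg, hgx⟩
end

section
/- For 0 < ε₁ < ε₂ < 1, every element of [0,1] is a finite product of elements of G = [0,ε₁] ∪ [ε₂,1], and the minimal number of factors needed, maximized over [0,1], equals ⌈ln(ε₁)/ln(ε₂)⌉. -/
private lemma factor_aux (ε₂ : ℝ) (h2 : 0 < ε₂) (h1 : ε₂ < 1) :
    ∀ k : ℕ, ∀ x : ℝ, 0 ≤ x → x ≤ 1 → ε₂ ^ k ≤ x →
      ∃ l : List ℝ, l ≠ [] ∧ (∀ g ∈ l, ε₂ ≤ g ∧ g ≤ 1) ∧ l.prod = x ∧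
        l.length ≤ max k 1 := by
  intro k
  induction k with
  | zero =>
    intro x _ hx1 hk
    simp only [pow_zero] at hk
    have hx : x = 1 := le_antisymm hx1 hk
    exact ⟨[1], by simp, by intro g hg; simp at hg; subst hg; exact ⟨h1.le, le_refl 1⟩,
      by simp [hx], by simp⟩
  | succ k ih =>
    intro x hx0 hx1 hk
    by_cases h : ε₂ ^ k ≤ x
    · obtain ⟨l, hne, hmem, hprod, hlen⟩ := ih x hx0 hx1 h
      exact ⟨l, hne, hmem, hprod, hlen.trans (max_le_max (Nat.le_succ k) le_rfl)⟩
    · push_neg at h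
      have hpk : (0:ℝ) < ε₂ ^ k := pow_pos h2 k
      set y := x / ε₂ ^ k with hy
      have hy1 : y < 1 := (div_lt_one hpk).mpr h
      have hy2 : ε₂ ≤ y := by
        rw [hy, le_div_iff₀ hpk]
        calc ε₂ * ε₂ ^ k = ε₂ ^ (k+1) := by ring
          _ ≤ x := hk
      refine ⟨List.replicate k ε₂ ++ [y], by simp, ?_, ?_, ?_⟩
      · intro g hg
        simp only [List.mem_append, List.mem_replicate, List.mem_singleton] at hg
        rcases hg with ⟨_, rfl⟩ | rfl
        · exact ⟨le_refl _, h1.le⟩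
        · exact ⟨hy2, hy1.le⟩
      · rw [List.prod_append, List.prod_replicate, List.prod_singleton, hy,
          mul_div_cancel₀ x (ne_of_gt hpk)]
      · simp only [List.length_append, List.length_replicate, List.length_singleton]
        omega

private lemma prod01 (l : List ℝ) (h : ∀ g ∈ l, 0 ≤ g ∧ g ≤ 1) :
    0 ≤ l.prod ∧ l.prod ≤ 1 := by
  induction l with
  | nil => simp
  | cons a t ih =>
    obtain ⟨ha0, ha1⟩ := h a (by simp)
    obtain ⟨ht0, ht1⟩ := ih (fun g hg => h g (by simp [hg]))
    simp only [List.prod_cons]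
    constructor
    · positivity
    · nlinarith

private lemma prod_le_mem (l : List ℝ) (h : ∀ g ∈ l, 0 ≤ g ∧ g ≤ 1) :
    ∀ g ∈ l, l.prod ≤ g := by
  induction l with
  | nil => simp
  | cons a t ih =>
    intro g hg
    obtain ⟨ha0, ha1⟩ := h a (by simp)
    have ht := fun g hg => h g (List.mem_cons_of_mem a hg)
    obtain ⟨ht0, ht1⟩ := prod01 t ht
    simp only [List.prod_cons]
    rcases List.mem_cons.mp hg with rfl | hg'
    · nlinarith
    · have := ih ht g hg'
      nlinarith

private lemma pow_le_lprod (c : ℝ) (hc : 0 ≤ c) (l : List ℝ) (h : ∀ g ∈ l, c ≤ g) :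
    c ^ l.length ≤ l.prod := by
  induction l with
  | nil => simp
  | cons a t ih =>
    have ha := h a (by simp)
    have ht := ih (fun g hg => h g (List.mem_cons_of_mem a hg))
    have ht0 : (0:ℝ) ≤ t.prod := le_trans (pow_nonneg hc _) ht
    simp only [List.prod_cons, List.length_cons, pow_succ']
    have hcp : (0:ℝ) ≤ c ^ t.length := pow_nonneg hc _
    nlinarith

theorem unit_interval_generators_factor_count (ε₁ ε₂ : ℝ)
    (h0 : 0 < ε₁) (h12 : ε₁ < ε₂) (h1 : ε₂ < 1) :
    (∀ x ∈ Set.Icc (0 : ℝ) 1, ∃ l : List ℝ, l ≠ [] ∧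
        (∀ g ∈ l, g ∈ Set.Icc (0 : ℝ) ε₁ ∪ Set.Icc ε₂ 1) ∧ l.prod = x ∧
        (l.length : ℤ) ≤ ⌈Real.log ε₁ / Real.log ε₂⌉) ∧
    (∃ x ∈ Set.Icc (0 : ℝ) 1, ∀ l : List ℝ,
        (∀ g ∈ l, g ∈ Set.Icc (0 : ℝ) ε₁ ∪ Set.Icc ε₂ 1) → l.prod = x →
        ⌈Real.log ε₁ / Real.log ε₂⌉ ≤ (l.length : ℤ)) := by
  have h2pos : (0:ℝ) < ε₂ := h0.trans h12
  have hL2 : Real.log ε₂ < 0 := Real.log_neg h2pos h1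
  have hL1 : Real.log ε₁ < Real.log ε₂ := Real.log_lt_log h0 h12
  set r : ℝ := Real.log ε₁ / Real.log ε₂ with hr
  have hr1 : 1 < r := by
    rw [hr, lt_div_iff_of_neg hL2]
    linarith
  set m : ℤ := ⌈r⌉ with hm
  have hm2 : 2 ≤ m := by
    have : (1:ℤ) < m := by
      rw [hm]
      exact_mod_cast Int.lt_ceil.mpr (by exact_mod_cast hr1)
    omega
  set n : ℕ := m.toNat with hn
  have hnm : (n : ℤ) = m := Int.toNat_of_nonneg (by omega)
  have hn2 : 2 ≤ n := by omega
  have hnr : r ≤ (n : ℝ) := by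
    have := Int.le_ceil r
    rw [← hm] at this
    calc r ≤ (m : ℝ) := this
      _ = (n : ℝ) := by exact_mod_cast hnm.symm
  -- key inequality A : ε₂ ^ n ≤ ε₁
  have hA : ε₂ ^ n ≤ ε₁ := by
    have h1' : (n : ℝ) * Real.log ε₂ ≤ Real.log ε₁ := by
      rw [hr, div_le_iff_of_neg hL2] at hnr
      linarith
    have := Real.exp_le_exp.mpr h1'
    rwa [Real.exp_log h0, ← Real.log_pow, Real.exp_log (pow_pos h2pos n)] at this
  -- key inequality B : ε₁ < ε₂ ^ (n - 1)
  have hB : ε₁ < ε₂ ^ (n - 1) := by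
    have hlt : ((n:ℝ) - 1) < r := by
      have := Int.ceil_lt_add_one r
      rw [← hm] at this
      have : (m : ℝ) < r + 1 := by exact_mod_cast this
      have hmn : (m : ℝ) = (n : ℝ) := by exact_mod_cast hnm.symm
      linarith
    have h1' : Real.log ε₁ < ((n:ℝ) - 1) * Real.log ε₂ := by
      rw [hr, lt_div_iff_of_neg hL2] at hlt
      linarith
    have hcast : ((n - 1 : ℕ) : ℝ) = (n : ℝ) - 1 := by
      have : 1 ≤ n := by omega
      push_cast [this]
      ring
    have := Real.exp_lt_exp.mpr h1'
    rwa [Real.exp_log h0, ← hcast, ← Real.log_pow,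
      Real.exp_log (pow_pos h2pos (n-1))] at this
  constructor
  · -- upper bound
    intro x hx
    obtain ⟨hx0, hx1⟩ := hx
    by_cases hc : x ≤ ε₁
    · refine ⟨[x], by simp, ?_, by simp, ?_⟩
      · intro g hg; simp at hg; subst hg
        exact Or.inl ⟨hx0, hc⟩
      · simp only [List.length_singleton]
        omega
    · push_neg at hc
      obtain ⟨l, hne, hmem, hprod, hlen⟩ :=
        factor_aux ε₂ h2pos h1 n x hx0 hx1 (hA.trans hc.le)
      refine ⟨l, hne, ?_, hprod, ?_⟩
      · intro g hg; exact Or.inr ⟨(hmem g hg).1, (hmem g hg).2⟩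
      · have : max n 1 = n := by omega
        rw [this] at hlen
        calc (l.length : ℤ) ≤ (n : ℤ) := by exact_mod_cast hlen
          _ = m := hnm
  · -- lower bound
    set x : ℝ := (ε₁ + ε₂ ^ (n - 1)) / 2 with hxdef
    have hx1lt : ε₁ < x := by rw [hxdef]; linarith
    have hxlt : x < ε₂ ^ (n - 1) := by rw [hxdef]; linarith
    have hpow1 : ε₂ ^ (n - 1) ≤ 1 := pow_le_one₀ h2pos.le h1.le
    refine ⟨x, ⟨by positivity, by linarith⟩, ?_⟩
    intro l hmem hprod
    -- all elements are in [ε₂, 1]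
    have hall : ∀ g ∈ l, ε₂ ≤ g ∧ g ≤ 1 := by
      intro g hg
      rcases hmem g hg with ⟨hg0, hg1⟩ | hg2
      · exfalso
        have h01 : ∀ g ∈ l, 0 ≤ g ∧ g ≤ 1 := by
          intro g' hg'
          rcases hmem g' hg' with ⟨a, b⟩ | ⟨a, b⟩
          · exact ⟨a, b.trans (by linarith)⟩
          · exact ⟨by linarith, b⟩
        have := prod_le_mem l h01 g hg
        rw [hprod] at this
        linarith
      · exact hg2
    -- product ≥ ε₂ ^ length
    have hge : ε₂ ^ l.length ≤ x := by
      rw [← hprod]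
      exact pow_le_lprod ε₂ h2pos.le l (fun g hg => (hall g hg).1)
    -- hence length ≥ n
    by_contra hcon
    push_neg at hcon
    have hlen : l.length ≤ n - 1 := by omega
    have : ε₂ ^ (n - 1) ≤ ε₂ ^ l.length :=
      pow_le_pow_of_le_one h2pos.le h1.le hlen
    linarith
end

section
/- Let A ∈ s(n), n ≥ 2, and suppose there exist indices i ≠ k such that every row j with A_{jk} > 0 also has A_{ji} > 0 (i.e., sgn(A)e_i ≥ sgn(A)e_k entry-wise). Then A is divisible: there exist B, C ∈ s(n), neither of which is a permutation matrix, with A = BC. -/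
open Matrix

theorem comparable_columns_implies_divisible {n : ℕ} (hn : 2 ≤ n)
    (A : Matrix (Fin n) (Fin n) ℝ) (hA : IsStochastic A)
    (i k : Fin n) (hik : i ≠ k)
    (hcols : ∀ j, 0 < A j k → 0 < A j i) :
    ∃ B C : Matrix (Fin n) (Fin n) ℝ, IsStochastic B ∧ IsStochastic C ∧
      ¬ IsPermMatrix B ∧ ¬ IsPermMatrix C ∧ A = B * C := by
  obtain ⟨hA0, hA1⟩ := hA
  have hki : k ≠ i := fun h => hik h.symm
  -- the support of column k is nonempty
  have hS : (Finset.univ.filter (fun j => 0 < A j k)).Nonempty := by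
    by_contra h
    have hz : ∀ j, A j k = 0 := by
      intro j
      by_contra hj
      exact h ⟨j, Finset.mem_filter.mpr ⟨Finset.mem_univ j,
        lt_of_le_of_ne (hA0 j k) (Ne.symm hj)⟩⟩
    have h1 := hA1 k
    rw [Finset.sum_congr rfl (fun j _ => hz j)] at h1
    simp at h1
  set S := Finset.univ.filter (fun j => 0 < A j k) with hSdef
  set tm := S.inf' hS (fun j => A j i / A j k) with htmdef
  have htm : 0 < tm := by
    rw [htmdef, Finset.lt_inf'_iff]
    intro j hj
    rw [hSdef, Finset.mem_filter] at hj
    exact div_pos (hcols j hj.2) hj.2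
  have hm : (0:ℝ) < min 1 tm := lt_min one_pos htm
  -- pick t in (0, min 1 tm) avoiding all entries of column i
  have hne : ((Set.Ioo (0:ℝ) (min 1 tm)) \
      ↑(Finset.image (fun j => A j i) Finset.univ)).Nonempty :=
    ((Set.Ioo_infinite hm).diff (Finset.finite_toSet _)).nonempty
  obtain ⟨t, ⟨ht0, htlt⟩, htF⟩ := hne
  have ht1 : t < 1 := lt_of_lt_of_le htlt (min_le_left _ _)
  have httm : t < tm := lt_of_lt_of_le htlt (min_le_right _ _)
  have h1t : (0:ℝ) < 1 - t := by linarith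
  have hkey : ∀ a, t * A a k ≤ A a i := by
    intro a
    by_cases h : 0 < A a k
    · have h2 : tm ≤ A a i / A a k :=
        Finset.inf'_le _ (by rw [hSdef]; exact Finset.mem_filter.mpr ⟨Finset.mem_univ a, h⟩)
      have h3 : t ≤ A a i / A a k := le_of_lt (lt_of_lt_of_le httm h2)
      calc t * A a k ≤ (A a i / A a k) * A a k :=
            mul_le_mul_of_nonneg_right h3 (le_of_lt h)
        _ = A a i := div_mul_cancel₀ _ (ne_of_gt h)
    · have hz : A a k = 0 := le_antisymm (not_lt.mp h) (hA0 a k)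
      rw [hz, mul_zero]; exact hA0 a i
  set B : Matrix (Fin n) (Fin n) ℝ :=
    Matrix.of (fun a b => if b = i then (A a i - t * A a k) / (1 - t) else A a b) with hB
  set C : Matrix (Fin n) (Fin n) ℝ :=
    Matrix.of (fun a b => if b = i then (if a = i then 1 - t else if a = k then t else 0)
      else (if a = b then 1 else 0)) with hC
  have hBa : ∀ a b, B a b = if b = i then (A a i - t * A a k) / (1 - t) else A a b :=
    fun a b => rfl
  have hCa : ∀ a b, C a b = if b = i then (if a = i then 1 - t else if a = k then t else 0)
      else (if a = b then 1 else 0) := fun a b => rfl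
  refine ⟨B, C, ⟨?_, ?_⟩, ⟨?_, ?_⟩, ?_, ?_, ?_⟩
  · -- B nonneg
    intro a b
    rw [hBa]
    by_cases hb : b = i
    · rw [if_pos hb]
      exact div_nonneg (by linarith [hkey a]) (le_of_lt h1t)
    · rw [if_neg hb]; exact hA0 a b
  · -- B column sums
    intro b
    by_cases hb : b = i
    · rw [hb]
      simp only [hBa, if_pos]
      rw [← Finset.sum_div, Finset.sum_sub_distrib, ← Finset.mul_sum, hA1 i, hA1 k, mul_one]
      exact div_self (ne_of_gt h1t)
    · simp only [hBa, if_neg hb]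
      exact hA1 b
  · -- C nonneg
    intro a b
    rw [hCa]
    split_ifs <;> linarith
  · -- C column sums
    intro b
    by_cases hb : b = i
    · rw [hb]
      simp only [hCa, if_pos]
      have hsplit : ∀ a : Fin n, (if a = i then 1 - t else if a = k then t else 0)
          = (if a = i then 1 - t else 0) + (if a = k then t else 0) := by
        intro a
        by_cases h1 : a = i
        · subst h1; simp [hik]
        · simp [h1]
      rw [Finset.sum_congr rfl (fun a _ => hsplit a), Finset.sum_add_distrib]
      simp [Finset.sum_ite_eq']
    · simp only [hCa, if_neg hb]
      simp [Finset.sum_ite_eq']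
  · -- B is not a permutation matrix
    rintro ⟨σ, hσ⟩
    have hσik : σ i ≠ σ k := fun h => hik (σ.injective h)
    have hAk : A (σ k) k = 1 := by
      have := hσ (σ k) k
      rw [hBa, if_neg hki] at this
      rw [this, if_pos rfl]
    have h2 := hσ (σ k) i
    rw [hBa, if_pos rfl, if_neg hσik, hAk, mul_one, div_eq_zero_iff] at h2
    rcases h2 with h2 | h2
    · have ht : t = A (σ k) i := by linarith
      exact htF (Finset.mem_coe.mpr (Finset.mem_image.mpr ⟨σ k, Finset.mem_univ _, ht.symm⟩))
    · linarith
  · -- C is not a permutation matrix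
    rintro ⟨σ, hσ⟩
    have := hσ i i
    rw [hCa, if_pos rfl, if_pos rfl] at this
    split_ifs at this <;> linarith
  · -- A = B * C
    ext a b
    rw [mul_apply]
    by_cases hb : b = i
    · rw [hb]
      have hsplit : ∀ c : Fin n, B a c * C c i
          = (if c = i then ((A a i - t * A a k) / (1 - t)) * (1 - t) else 0)
            + (if c = k then A a k * t else 0) := by
        intro c
        rw [hBa, hCa, if_pos rfl]
        by_cases h1 : c = i
        · subst h1; simp [hik]
        · by_cases h2 : c = k
          · subst h2; simp [h1, hki]
          · simp [h1, h2]
      rw [Finset.sum_congr rfl (fun c _ => hsplit c), Finset.sum_add_distrib]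
      simp only [Finset.sum_ite_eq', Finset.mem_univ, if_pos]
      rw [div_mul_cancel₀ _ (ne_of_gt h1t)]
      ring
    · have hsplit : ∀ c : Fin n, B a c * C c b = if c = b then B a b else 0 := by
        intro c
        rw [hCa, if_neg hb]
        by_cases h1 : c = b
        · subst h1; simp
        · simp [h1]
      rw [Finset.sum_congr rfl (fun c _ => hsplit c)]
      simp [Finset.sum_ite_eq', hBa, hb]
end

section
/- Every column-stochastic matrix A ∈ s(n) (n ≥ 2) that has a strictly positive column (i.e., there exists i with A_{ji} > 0 for all j) is divisible: A = BC for some B, C ∈ s(n) with neither B nor C a permutation matrix. -/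
/-!
Let column `i` of `A` be positive and pick `j ≠ i`. Mixing column `i` with a small multiple `δ`
of column `j` is right multiplication by the identity with column `i` replaced by
`(1 - δ) eᵢ + δ eⱼ`, a stochastic matrix that is not a permutation since its `(i, i)` entry is
`1 - δ`. The mixing is inverted on `A` by replacing column `i` with `(Aᵢ - δ Aⱼ) / (1 - δ)`,
which stays positive for small `δ` because `Aᵢ` is; a matrix with a positive column is not a
permutation matrix once `n ≥ 2`.
-/

open Matrix

theorem exists_between_forall_lt {ι α : Type*} [Finite ι] [Nonempty ι] [LinearOrder α]
    [DenselyOrdered α] {a : α} {f : ι → α} (hf : ∀ i, a < f i) :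
    ∃ δ, a < δ ∧ ∀ i, δ < f i := by
  obtain ⟨i₀, hi₀⟩ := Finite.exists_min f
  obtain ⟨δ, haδ, hδ⟩ := exists_between (hf i₀)
  exact ⟨δ, haδ, fun i => hδ.trans_le (hi₀ i)⟩

theorem Matrix.eq_updateCol_mul_updateCol_one {m n K : Type*} [Fintype n] [DecidableEq n]
    [Field K] (A : Matrix m n K) {i j : n} (hji : j ≠ i) {δ : K} (hδ : δ ≠ 1) :
    A = A.updateCol i ((1 - δ)⁻¹ • (A.col i - δ • A.col j)) *
      (1 : Matrix n n K).updateCol i ((1 - δ) • Pi.single i 1 + δ • Pi.single j 1) := by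
  set B := A.updateCol i ((1 - δ)⁻¹ • (A.col i - δ • A.col j))
  have hBj : B.col j = A.col j := funext fun k => updateCol_ne hji
  have hBi : B.col i = (1 - δ)⁻¹ • (A.col i - δ • A.col j) := funext fun k => updateCol_self
  have hmix : B *ᵥ ((1 - δ) • Pi.single i 1 + δ • Pi.single j 1) = A.col i := by
    rw [mulVec_add, mulVec_smul, mulVec_smul, mulVec_single_one, mulVec_single_one, hBi, hBj,
      smul_inv_smul₀ (sub_ne_zero.2 hδ.symm), sub_add_cancel]
  rw [mul_updateCol, Matrix.mul_one, hmix, updateCol_idem]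
  exact (updateCol_eq_self A i).symm

section

variable {n : ℕ} {A : Matrix (Fin n) (Fin n) ℝ}

theorem IsStochastic.apply_le_one (hA : IsStochastic A) (i j : Fin n) : A i j ≤ 1 :=
  hA.2 j ▸ Finset.single_le_sum (fun k _ => hA.1 k j) (Finset.mem_univ i)

theorem isStochastic_one : IsStochastic (1 : Matrix (Fin n) (Fin n) ℝ) :=
  ⟨fun i j => by rw [one_apply]; split_ifs <;> norm_num, fun j => by simp [one_apply]⟩

theorem IsStochastic.updateCol (hA : IsStochastic A) (j : Fin n) {v : Fin n → ℝ}
    (hv : 0 ≤ v) (hv₁ : ∑ k, v k = 1) : IsStochastic (A.updateCol j v) := by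
  refine ⟨fun k l => ?_, fun l => ?_⟩
  · rw [updateCol_apply]; split_ifs
    exacts [hv k, hA.1 k l]
  · simp only [updateCol_apply]; split_ifs
    exacts [hv₁, hA.2 l]

theorem isStochastic_one_updateCol_mix (i j : Fin n) {δ : ℝ} (hδ₀ : 0 ≤ δ) (hδ₁ : δ ≤ 1) :
    IsStochastic ((1 : Matrix (Fin n) (Fin n) ℝ).updateCol i
      ((1 - δ) • Pi.single i 1 + δ • Pi.single j 1)) := by
  have hsingle (l : Fin n) : 0 ≤ (Pi.single l 1 : Fin n → ℝ) := Pi.single_nonneg.2 zero_le_one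
  refine isStochastic_one.updateCol i ?_ (by simp [Finset.sum_add_distrib, ← Finset.mul_sum])
  exact add_nonneg (smul_nonneg (sub_nonneg.2 hδ₁) (hsingle i)) (smul_nonneg hδ₀ (hsingle j))

theorem IsPermMatrix.apply_eq_zero_or_eq_one (hA : IsPermMatrix A) (i j : Fin n) :
    A i j = 0 ∨ A i j = 1 := by
  obtain ⟨σ, hσ⟩ := hA
  rw [hσ]; split_ifs <;> simp

theorem IsPermMatrix.exists_apply_eq_zero [Nontrivial (Fin n)] (hA : IsPermMatrix A)
    (j : Fin n) : ∃ i, A i j = 0 := by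
  obtain ⟨σ, hσ⟩ := hA
  obtain ⟨i, hi⟩ := exists_ne (σ j)
  exact ⟨i, by rw [hσ, if_neg hi.symm]⟩

end

theorem positive_column_implies_divisible {n : ℕ} (hn : 2 ≤ n)
    (A : Matrix (Fin n) (Fin n) ℝ) (hA : IsStochastic A)
    (hpos : ∃ i, ∀ j, 0 < A j i) :
    ∃ B C : Matrix (Fin n) (Fin n) ℝ, IsStochastic B ∧ IsStochastic C ∧
      ¬ IsPermMatrix B ∧ ¬ IsPermMatrix C ∧ A = B * C := by
  obtain ⟨i, hi⟩ := hpos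
  have : Nontrivial (Fin n) := Fin.nontrivial_iff_two_le.2 hn
  obtain ⟨j, hji⟩ := exists_ne i
  obtain ⟨δ, hδ₀, hδ⟩ := exists_between_forall_lt hi
  have hδ₁ : 0 < 1 - δ := sub_pos.2 ((hδ i).trans_le (hA.apply_le_one i i))
  set w := (1 - δ)⁻¹ • (A.col i - δ • A.col j)
  set v : Fin n → ℝ := (1 - δ) • Pi.single i 1 + δ • Pi.single j 1
  have hw : ∀ k, 0 < w k := fun k => by
    have hδA : δ * A k j < A k i :=
      (mul_le_of_le_one_right hδ₀.le (hA.apply_le_one k j)).trans_lt (hδ k)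
    exact mul_pos (inv_pos.2 hδ₁) (sub_pos.2 hδA)
  have hw₁ : ∑ k, w k = 1 := by
    simp only [w, Pi.smul_apply, Pi.sub_apply, col_apply, smul_eq_mul, ← Finset.mul_sum,
      Finset.sum_sub_distrib, hA.2, mul_one]
    exact inv_mul_cancel₀ hδ₁.ne'
  have hvi : v i = 1 - δ := by simp [v, hji.symm]
  refine ⟨A.updateCol i w, (1 : Matrix (Fin n) (Fin n) ℝ).updateCol i v,
    hA.updateCol i (fun k => (hw k).le) hw₁,
    isStochastic_one_updateCol_mix i j hδ₀.le (by linarith),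
    fun hB => ?_, fun hC => ?_, A.eq_updateCol_mul_updateCol_one hji (by linarith)⟩
  · obtain ⟨k, hk⟩ := hB.exists_apply_eq_zero i
    exact (hw k).ne' (by rwa [updateCol_self] at hk)
  · have := hC.apply_eq_zero_or_eq_one i i
    rw [updateCol_self, hvi] at this
    rcases this with h | h <;> linarith
end

section
/- The 3×3 stochastic matrix (1/2)·[[0,1,1],[1,0,1],[1,1,0]] is indivisible in s(3): if it equals BC for B, C ∈ s(3), then exactly one of B, C is a permutation matrix. -/
open Matrix

private lemma sum_three {k l p : Fin 3} (hkl : k ≠ l) (hkp : k ≠ p) (hlp : l ≠ p)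
    (f : Fin 3 → ℝ) : ∑ m, f m = f k + f l + f p := by
  have hcov : ∀ m : Fin 3, m = k ∨ m = l ∨ m = p := by
    revert hkl hkp hlp; revert k l p; decide
  have huniv : (Finset.univ : Finset (Fin 3)) = {k, l, p} :=
    (Finset.eq_univ_iff_forall.mpr (fun m => by rcases hcov m with rfl|rfl|rfl <;> simp)).symm
  rw [huniv, Finset.sum_insert (by simp [hkl, hkp]), Finset.sum_insert (by simp [hlp]),
    Finset.sum_singleton, ← add_assoc]

private lemma perm_of_ones (B : Matrix (Fin 3) (Fin 3) ℝ) (hB : IsStochastic B)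
    {k l p a b c : Fin 3} (hkl : k ≠ l) (hkp : k ≠ p) (hlp : l ≠ p)
    (hab : a ≠ b) (hac : a ≠ c) (hbc : b ≠ c)
    (hak : B a k = 1) (hbl : B b l = 1) (hcp : B c p = 1) : IsPermMatrix B := by
  have covk : ∀ m : Fin 3, m = k ∨ m = l ∨ m = p := by
    have : ∀ k l p m : Fin 3, k ≠ l → k ≠ p → l ≠ p → (m = k ∨ m = l ∨ m = p) := by decide
    exact fun m => this k l p m hkl hkp hlp
  -- if a column has a 1 somewhere, all other entries of that column are 0
  have hzero : ∀ (m r i : Fin 3), B r m = 1 → i ≠ r → B i m = 0 := by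
    intro m r i h1 hne
    have hs := hB.2 m
    have hcovr : ∀ x : Fin 3, x = r ∨ x ≠ r := fun x => em (x = r)
    have hsum : ∑ x, B x m = B r m + ∑ x ∈ Finset.univ.erase r, B x m := by
      rw [← Finset.add_sum_erase _ _ (Finset.mem_univ r)]
    have hnn : 0 ≤ ∑ x ∈ Finset.univ.erase r, B x m :=
      Finset.sum_nonneg (fun x _ => hB.1 x m)
    have hmem : i ∈ Finset.univ.erase r := Finset.mem_erase.mpr ⟨hne, Finset.mem_univ i⟩
    have hle : B i m ≤ ∑ x ∈ Finset.univ.erase r, B x m :=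
      Finset.single_le_sum (fun x _ => hB.1 x m) hmem
    have h0 : ∑ x ∈ Finset.univ.erase r, B x m = 0 := by
      rw [hsum, h1] at hs; linarith
    have := hB.1 i m
    linarith
  set f : Fin 3 → Fin 3 := fun m => if m = k then a else if m = l then b else c with hf
  have hfk : f k = a := by simp [hf]
  have hfl : f l = b := by simp [hf, Ne.symm hkl]
  have hfp : f p = c := by simp [hf, Ne.symm hkp, Ne.symm hlp]
  have hinj : Function.Injective f := by
    intro x y hxy
    rcases covk x with rfl|rfl|rfl <;> rcases covk y with rfl|rfl|rfl <;>
      simp only [hfk, hfl, hfp] at hxy <;>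
      first
        | rfl
        | exact absurd hxy hab
        | exact absurd hxy hac
        | exact absurd hxy hbc
        | exact absurd hxy.symm hab
        | exact absurd hxy.symm hac
        | exact absurd hxy.symm hbc
  refine ⟨Equiv.ofBijective f (Finite.injective_iff_bijective.mp hinj), fun i m => ?_⟩
  have he : (Equiv.ofBijective f (Finite.injective_iff_bijective.mp hinj)) m = f m := rfl
  rw [he]
  rcases covk m with rfl|rfl|rfl
  · rw [hfk]
    by_cases hai : a = i
    · rw [if_pos hai, ← hai]; exact hak
    · rw [if_neg hai]; exact hzero m a i hak (fun h => hai h.symm)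
  · rw [hfl]
    by_cases hbi : b = i
    · rw [if_pos hbi, ← hbi]; exact hbl
    · rw [if_neg hbi]; exact hzero m b i hbl (fun h => hbi h.symm)
  · rw [hfp]
    by_cases hci : c = i
    · rw [if_pos hci, ← hci]; exact hcp
    · rw [if_neg hci]; exact hzero m c i hcp (fun h => hci h.symm)

private lemma core (B C : Matrix (Fin 3) (Fin 3) ℝ) (hB : IsStochastic B) (hC : IsStochastic C)
    (hA : ∀ i j', (∑ m, B i m * C m j') = if i = j' then (0:ℝ) else 1/2)
    (j k l : Fin 3) (hkl : k ≠ l) (hk : 0 < C k j) (hl : 0 < C l j) :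
    IsPermMatrix B := by
  obtain ⟨p, hkp, hlp⟩ :=
    (by decide : ∀ k l : Fin 3, k ≠ l → ∃ p, k ≠ p ∧ l ≠ p) k l hkl
  obtain ⟨j2, j3, hjj2, hjj3, hj23⟩ :=
    (by decide : ∀ j : Fin 3, ∃ j2 j3, j ≠ j2 ∧ j ≠ j3 ∧ j2 ≠ j3) j
  -- column sums rewritten
  have colB : ∀ m, B j m + B j2 m + B j3 m = 1 := fun m => by
    rw [← sum_three hjj2 hjj3 hj23 (fun i => B i m)]; exact hB.2 m
  have colC : ∀ m, C k m + C l m + C p m = 1 := fun m => by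
    rw [← sum_three hkl hkp hlp (fun i => C i m)]; exact hC.2 m
  have hAeq : ∀ i j', B i k * C k j' + B i l * C l j' + B i p * C p j' =
      if i = j' then (0:ℝ) else 1/2 := fun i j' => by
    rw [← sum_three hkl hkp hlp (fun m => B i m * C m j')]; exact hA i j'
  -- zero diagonal forces products zero
  have F0 : ∀ i m, B i m * C m i = 0 := by
    intro i m
    have h := hA i i
    rw [if_pos rfl] at h
    exact (Finset.sum_eq_zero_iff_of_nonneg
      (fun x _ => mul_nonneg (hB.1 i x) (hC.1 x i))).mp h m (Finset.mem_univ m)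
  have Bzero : ∀ i m, 0 < C m i → B i m = 0 := by
    intro i m hpos
    rcases mul_eq_zero.mp (F0 i m) with h | h
    · exact h
    · exact absurd h (ne_of_gt hpos)
  have Ble1 : ∀ i m, B i m ≤ 1 := by
    intro i m
    have h := colB m
    have h1 := hB.1 j m; have h2 := hB.1 j2 m; have h3 := hB.1 j3 m
    rcases (by decide : ∀ j j2 j3 i : Fin 3, j ≠ j2 → j ≠ j3 → j2 ≠ j3 →
        (i = j ∨ i = j2 ∨ i = j3)) j j2 j3 i hjj2 hjj3 hj23 with rfl|rfl|rfl <;> linarith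
  have Cle1 : ∀ i m, C i m ≤ 1 := by
    intro i m
    have h := colC m
    have h1 := hC.1 k m; have h2 := hC.1 l m; have h3 := hC.1 p m
    rcases (by decide : ∀ k l p i : Fin 3, k ≠ l → k ≠ p → l ≠ p →
        (i = k ∨ i = l ∨ i = p)) k l p i hkl hkp hlp with rfl|rfl|rfl <;> linarith
  have hBjk : B j k = 0 := Bzero j k hk
  have hBjl : B j l = 0 := Bzero j l hl
  -- step 1: column p of B is e_j, and C p j2 = C p j3 = 1/2
  have h2 : B j p * C p j2 = 1/2 := by
    have h := hAeq j j2
    rw [if_neg hjj2, hBjk, hBjl] at h; linarith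
  have h3 : B j p * C p j3 = 1/2 := by
    have h := hAeq j j3
    rw [if_neg hjj3, hBjk, hBjl] at h; linarith
  have hCpj2 : 0 < C p j2 := by nlinarith [Ble1 j p, hC.1 p j2, hB.1 j p]
  have hCpj3 : 0 < C p j3 := by nlinarith [Ble1 j p, hC.1 p j3, hB.1 j p]
  have hBj2p : B j2 p = 0 := Bzero j2 p hCpj2
  have hBj3p : B j3 p = 0 := Bzero j3 p hCpj3
  have hBjp : B j p = 1 := by have := colB p; linarith
  have hCpj2v : C p j2 = 1/2 := by rw [hBjp] at h2; linarith
  have hCpj3v : C p j3 = 1/2 := by rw [hBjp] at h3; linarith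
  -- columns remaining: C k j2 + C l j2 = 1/2 and same for j3
  have hcol2 : C k j2 + C l j2 = 1/2 := by have := colC j2; linarith
  have hcol3 : C k j3 + C l j3 = 1/2 := by have := colC j3; linarith
  -- forcing lemmas
  have hAj3j2 : B j3 k * C k j2 + B j3 l * C l j2 = 1/2 := by
    have h := hAeq j3 j2
    rw [if_neg (Ne.symm hj23), hBj3p] at h; linarith
  have hAj2j3 : B j2 k * C k j3 + B j2 l * C l j3 = 1/2 := by
    have h := hAeq j2 j3
    rw [if_neg hj23, hBj2p] at h; linarith
  have force : ∀ (x y u v : ℝ), 0 ≤ x → 0 ≤ y → u ≤ 1 → v ≤ 1 →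
      u * x + v * y = 1/2 → x + y = 1/2 → x ≠ 0 → u = 1 := by
    intro x y u v hx hy hu hv heq hsum hne
    have p1 : 0 ≤ (1 - u) * x := mul_nonneg (by linarith) hx
    have p2 : 0 ≤ (1 - v) * y := mul_nonneg (by linarith) hy
    have hz : (1 - u) * x = 0 := by nlinarith
    rcases mul_eq_zero.mp hz with h | h
    · linarith
    · exact absurd h hne
  have fk2 : C k j2 ≠ 0 → B j3 k = 1 := fun hne =>
    force (C k j2) (C l j2) (B j3 k) (B j3 l) (hC.1 k j2) (hC.1 l j2)
      (Ble1 j3 k) (Ble1 j3 l) hAj3j2 hcol2 hne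
  have fl2 : C l j2 ≠ 0 → B j3 l = 1 := fun hne =>
    force (C l j2) (C k j2) (B j3 l) (B j3 k) (hC.1 l j2) (hC.1 k j2)
      (Ble1 j3 l) (Ble1 j3 k) (by linarith) (by linarith) hne
  have fk3 : C k j3 ≠ 0 → B j2 k = 1 := fun hne =>
    force (C k j3) (C l j3) (B j2 k) (B j2 l) (hC.1 k j3) (hC.1 l j3)
      (Ble1 j2 k) (Ble1 j2 l) hAj2j3 hcol3 hne
  have fl3 : C l j3 ≠ 0 → B j2 l = 1 := fun hne =>
    force (C l j3) (C k j3) (B j2 l) (B j2 k) (hC.1 l j3) (hC.1 k j3)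
      (Ble1 j2 l) (Ble1 j2 k) (by linarith) (by linarith) hne
  by_cases hck2 : C k j2 = 0
  · -- column l gets weight in j2: B j3 l = 1; then C l j3 = 0, so C k j3 = 1/2: B j2 k = 1
    have hcl2 : C l j2 ≠ 0 := by intro h; rw [hck2, h] at hcol2; norm_num at hcol2
    have hBj3l : B j3 l = 1 := fl2 hcl2
    have hcl3 : C l j3 = 0 := by
      by_contra hcl3
      have hBj2l : B j2 l = 1 := fl3 hcl3
      have := colB l
      have := hB.1 j l
      linarith
    have hck3 : C k j3 ≠ 0 := by intro h; rw [h, hcl3] at hcol3; norm_num at hcol3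
    have hBj2k : B j2 k = 1 := fk3 hck3
    exact perm_of_ones B hB hkl hkp hlp hj23 (Ne.symm hjj2) (Ne.symm hjj3)
      hBj2k hBj3l hBjp
  · have hBj3k : B j3 k = 1 := fk2 hck2
    have hck3 : C k j3 = 0 := by
      by_contra hck3
      have hBj2k : B j2 k = 1 := fk3 hck3
      have := colB k
      have := hB.1 j k
      linarith
    have hcl3 : C l j3 ≠ 0 := by intro h; rw [hck3, h] at hcol3; norm_num at hcol3
    have hBj2l : B j2 l = 1 := fl3 hcl3
    exact perm_of_ones B hB hkl hkp hlp (Ne.symm hj23) (Ne.symm hjj3) (Ne.symm hjj2)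
      hBj3k hBj2l hBjp

theorem specific_matrix_indivisible :
    ∀ B C : Matrix (Fin 3) (Fin 3) ℝ, IsStochastic B → IsStochastic C →
      !![0, 1/2, 1/2; 1/2, 0, 1/2; 1/2, 1/2, 0] = B * C →
      Xor' (IsPermMatrix B) (IsPermMatrix C) := by
  intro B C hB hC hEq
  have hA : ∀ i j', (∑ m, B i m * C m j') = if i = j' then (0:ℝ) else 1/2 := by
    intro i j'
    rw [← Matrix.mul_apply, ← hEq]
    fin_cases i <;> fin_cases j' <;> norm_num [Fin.ext_iff]
  -- not both are permutation matrices
  have hnotboth : ¬(IsPermMatrix B ∧ IsPermMatrix C) := by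
    rintro ⟨⟨σ, hσ⟩, ⟨τ, hτ⟩⟩
    have h01 := hA 0 1
    rw [if_neg (by decide)] at h01
    simp only [hσ, hτ, Fin.sum_univ_three, mul_ite, ite_mul, one_mul, mul_one,
      mul_zero, zero_mul] at h01
    split_ifs at h01 <;> norm_num at h01
  -- at least one is a permutation matrix
  have hatleast : IsPermMatrix B ∨ IsPermMatrix C := by
    by_cases hCcol : ∀ j k l : Fin 3, 0 < C k j → 0 < C l j → k = l
    · right
      have hex : ∀ j, ∃ m, 0 < C m j := by
        intro j
        by_contra h
        push_neg at h
        have hz : ∀ m, C m j = 0 := fun m => le_antisymm (h m) (hC.1 m j)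
        have hs := hC.2 j
        rw [Fin.sum_univ_three, hz 0, hz 1, hz 2] at hs
        norm_num at hs
      choose σ hσ using hex
      have huniq : ∀ j i, i ≠ σ j → C i j = 0 := by
        intro j i hne
        by_contra h
        exact hne (hCcol j i (σ j) (lt_of_le_of_ne (hC.1 i j) (Ne.symm h)) (hσ j))
      have hone : ∀ j, C (σ j) j = 1 := by
        intro j
        have hs : ∑ i, C i j = C (σ j) j :=
          Finset.sum_eq_single (σ j) (fun i _ hi => huniq j i hi)
            (fun h => absurd (Finset.mem_univ _) h)
        rw [← hs]; exact hC.2 j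
      have hinj : Function.Injective σ := by
        intro a b hab
        by_contra hne
        have e1 : ∑ m, B a m * C m a = B a (σ a) := by
          rw [Finset.sum_eq_single (σ a) (fun m _ hm => by rw [huniq a m hm, mul_zero])
            (fun h => absurd (Finset.mem_univ _) h), hone, mul_one]
        have e2 : ∑ m, B a m * C m b = B a (σ b) := by
          rw [Finset.sum_eq_single (σ b) (fun m _ hm => by rw [huniq b m hm, mul_zero])
            (fun h => absurd (Finset.mem_univ _) h), hone, mul_one]
        have h1 := hA a a
        have h2 := hA a b
        rw [if_pos rfl, e1] at h1
        rw [if_neg hne, e2] at h2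
        rw [hab] at h1
        rw [h1] at h2
        norm_num at h2
      refine ⟨Equiv.ofBijective σ (Finite.injective_iff_bijective.mp hinj), fun i m => ?_⟩
      have he : (Equiv.ofBijective σ (Finite.injective_iff_bijective.mp hinj)) m = σ m := rfl
      rw [he]
      by_cases h : σ m = i
      · rw [if_pos h, ← h]; exact hone m
      · rw [if_neg h]; exact huniq m i (fun hh => h hh.symm)
    · left
      push_neg at hCcol
      obtain ⟨j, k, l, hk, hl, hkl⟩ := hCcol
      exact core B C hB hC hA j k l hkl hk hl
  rcases hatleast with h | h
  · exact Or.inl ⟨h, fun h' => hnotboth ⟨h, h'⟩⟩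
  · exact Or.inr ⟨h, fun h' => hnotboth ⟨h', h⟩⟩
end

section
/- Let G = {σ_x} ∪ conv{I, [[1,1],[0,0]]} ⊆ s(2), where σ_x = [[0,1],[1,0]] and the convex hull consists of matrices [[1,1−λ],[0,λ]] for λ ∈ [0,1]. Then every A ∈ s(2) is a product of at most 4 elements of G, and there exists A ∈ s(2) (e.g. A = (2/3)I + (1/3)σ_x) that is not a product of 3 or fewer elements of G. -/
open Matrix

def Gset2 : Set (Matrix (Fin 2) (Fin 2) ℝ) :=
  {!![0, 1; 1, 0]} ∪
    {M | ∃ l : ℝ, l ∈ Set.Icc (0 : ℝ) 1 ∧ M = !![1, 1 - l; 0, l]}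

lemma mem_G {g : Matrix (Fin 2) (Fin 2) ℝ} (hg : g ∈ Gset2) :
    g = !![0, 1; 1, 0] ∨ ∃ l : ℝ, 0 ≤ l ∧ l ≤ 1 ∧ g = !![1, 1 - l; 0, l] := by
  rcases hg with h | ⟨l, ⟨h0, h1⟩, rfl⟩
  · left; exact h
  · right; exact ⟨l, h0, h1, rfl⟩

lemma sigma_mem : !![(0:ℝ), 1; 1, 0] ∈ Gset2 := Or.inl rfl

lemma T_mem {l : ℝ} (h0 : 0 ≤ l) (h1 : l ≤ 1) : !![(1:ℝ), 1 - l; 0, l] ∈ Gset2 :=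
  Or.inr ⟨l, ⟨h0, h1⟩, rfl⟩

theorem s2_generating_set :
    (∀ A : Matrix (Fin 2) (Fin 2) ℝ, IsStochastic A →
      ∃ l : List (Matrix (Fin 2) (Fin 2) ℝ), l ≠ [] ∧
        (∀ g ∈ l, g ∈ Gset2) ∧ l.prod = A ∧ l.length ≤ 4) ∧
    (∀ l : List (Matrix (Fin 2) (Fin 2) ℝ), (∀ g ∈ l, g ∈ Gset2) →
      l.prod = !![2/3, 1/3; 1/3, 2/3] → 4 ≤ l.length) := by
  constructor
  · intro A hA
    obtain ⟨hpos, hsum⟩ := hA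
    set a := A 0 0 with ha_def
    set b := A 0 1 with hb_def
    have ha0 : 0 ≤ a := hpos 0 0
    have hb0 : 0 ≤ b := hpos 0 1
    have hs0 := hsum 0
    have hs1 := hsum 1
    simp [Fin.sum_univ_two] at hs0 hs1
    have hA10 : A 1 0 = 1 - a := by rw [← ha_def] at hs0; linarith
    have hA11 : A 1 1 = 1 - b := by rw [← hb_def] at hs1; linarith
    have ha1 : a ≤ 1 := by have := hpos 1 0; rw [hA10] at this; linarith
    have hb1 : b ≤ 1 := by have := hpos 1 1; rw [hA11] at this; linarith
    have hAeq : A = !![a, b; 1 - a, 1 - b] := by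
      ext i j
      fin_cases i <;> fin_cases j <;>
        simp [← ha_def, ← hb_def, hA10, hA11]
    rcases le_or_gt b a with hba | hab
    · rcases eq_or_lt_of_le hb1 with hb | hb
      · -- b = 1, hence a = 1, A = T 0
        have haa : a = 1 := le_antisymm ha1 (hb ▸ hba)
        refine ⟨[!![1, 1 - (0:ℝ); 0, 0]], by simp, ?_, ?_, by simp⟩
        · intro g hg
          simp at hg
          subst hg
          exact Or.inr ⟨0, ⟨le_rfl, zero_le_one⟩, by norm_num⟩
        · rw [hAeq, haa, ← hb]
          norm_num
      · -- b < 1 : A = T(1-b) σ T((a-b)/(1-b)) σ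
        have hb1' : (0:ℝ) < 1 - b := by linarith
        set μ := (a - b) / (1 - b) with hμ
        have hμ0 : 0 ≤ μ := div_nonneg (by linarith) (by linarith)
        have hμ1 : μ ≤ 1 := by
          rw [hμ, div_le_one hb1']
          linarith
        refine ⟨[!![1, 1 - (1 - b); 0, 1 - b], !![0, 1; 1, 0],
                  !![1, 1 - μ; 0, μ], !![0, 1; 1, 0]], by simp, ?_, ?_, by simp⟩
        · intro g hg
          simp at hg
          rcases hg with rfl | rfl | rfl | rfl
          · exact Or.inr ⟨1 - b, ⟨by linarith, by linarith⟩, by norm_num⟩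
          · exact sigma_mem
          · exact T_mem hμ0 hμ1
          · exact sigma_mem
        · rw [hAeq]
          simp only [List.prod_cons, List.prod_nil, mul_one]
          ext i j
          fin_cases i <;> fin_cases j <;>
            simp [Matrix.mul_apply, Fin.sum_univ_two, hμ] <;>
            (try field_simp) <;> ring
    · -- a < b : A = T(1-a) σ T((b-a)/(1-a))
      have ha1' : (0:ℝ) < 1 - a := by linarith
      set μ := (b - a) / (1 - a) with hμ
      have hμ0 : 0 ≤ μ := div_nonneg (by linarith) (by linarith)
      have hμ1 : μ ≤ 1 := by
        rw [hμ, div_le_one ha1']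
        linarith
      refine ⟨[!![1, 1 - (1 - a); 0, 1 - a], !![0, 1; 1, 0],
                !![1, 1 - μ; 0, μ]], by simp, ?_, ?_, by simp⟩
      · intro g hg
        simp at hg
        rcases hg with rfl | rfl | rfl
        · exact Or.inr ⟨1 - a, ⟨by linarith, by linarith⟩, by norm_num⟩
        · exact sigma_mem
        · exact T_mem hμ0 hμ1
      · rw [hAeq]
        simp only [List.prod_cons, List.prod_nil, mul_one]
        ext i j
        fin_cases i <;> fin_cases j <;>
          simp [Matrix.mul_apply, Fin.sum_univ_two, hμ] <;>
          (try field_simp) <;> ring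
  · intro l hl hprod
    rcases l with _ | ⟨g1, _ | ⟨g2, _ | ⟨g3, _ | ⟨g4, t⟩⟩⟩⟩
    · exfalso
      simp only [List.prod_nil] at hprod
      have h := congrFun (congrFun hprod 0) 1
      simp [Matrix.one_apply] at h
    · exfalso
      simp only [List.prod_cons, List.prod_nil, mul_one] at hprod
      rcases mem_G (hl g1 (by simp)) with rfl | ⟨l1, h10, h11, rfl⟩ <;>
      · have h := congrFun (congrFun hprod 1) 0
        simp at h
        try norm_num at h
    · exfalso
      simp only [List.prod_cons, List.prod_nil, mul_one] at hprod
      rcases mem_G (hl g1 (by simp)) with rfl | ⟨l1, h10, h11, rfl⟩ <;>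
        rcases mem_G (hl g2 (by simp)) with rfl | ⟨l2, h20, h21, rfl⟩
      · have h := congrFun (congrFun hprod 0) 0
        simp [Matrix.mul_apply, Fin.sum_univ_two] at h
        try norm_num at h
      · have h := congrFun (congrFun hprod 1) 0
        simp [Matrix.mul_apply, Fin.sum_univ_two] at h
        try norm_num at h
      · have h := congrFun (congrFun hprod 1) 1
        simp [Matrix.mul_apply, Fin.sum_univ_two] at h
        try norm_num at h
      · have h := congrFun (congrFun hprod 1) 0
        simp [Matrix.mul_apply, Fin.sum_univ_two] at h
        try norm_num at h
    · exfalso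
      simp only [List.prod_cons, List.prod_nil, mul_one] at hprod
      rcases mem_G (hl g1 (by simp)) with rfl | ⟨l1, h10, h11, rfl⟩ <;>
        rcases mem_G (hl g2 (by simp)) with rfl | ⟨l2, h20, h21, rfl⟩ <;>
          rcases mem_G (hl g3 (by simp)) with rfl | ⟨l3, h30, h31, rfl⟩
      · -- σσσ = σ
        have h := congrFun (congrFun hprod 0) 0
        simp [Matrix.mul_apply, Fin.sum_univ_two] at h
        try norm_num at h
      · -- σσT = T
        have h := congrFun (congrFun hprod 1) 0
        simp [Matrix.mul_apply, Fin.sum_univ_two] at h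
        try norm_num at h
      · -- σTσ
        have h := congrFun (congrFun hprod 0) 1
        simp [Matrix.mul_apply, Fin.sum_univ_two] at h
        try norm_num at h
      · -- σTT
        have h := congrFun (congrFun hprod 1) 0
        simp [Matrix.mul_apply, Fin.sum_univ_two] at h
        try norm_num at h
      · -- Tσσ = T
        have h := congrFun (congrFun hprod 1) 0
        simp [Matrix.mul_apply, Fin.sum_univ_two] at h
        try norm_num at h
      · -- TσT
        have h1 := congrFun (congrFun hprod 1) 0
        have h2 := congrFun (congrFun hprod 1) 1
        simp [Matrix.mul_apply, Fin.sum_univ_two] at h1 h2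
        nlinarith [h1, h2, h30]
      · -- TTσ
        have h := congrFun (congrFun hprod 1) 1
        simp [Matrix.mul_apply, Fin.sum_univ_two] at h
        try norm_num at h
      · -- TTT
        have h := congrFun (congrFun hprod 1) 0
        simp [Matrix.mul_apply, Fin.sum_univ_two] at h
        try norm_num at h
    · simp only [List.length_cons]
      omega
end
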